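/- arXiv:1309.2612 — 2 statements merged into one kernel-verified Lean document; each statement's English description precedes it below -/
import Mathlib

section
/- Let W be a linear subspace of a dual Banach space F* that is sequentially closed in the weak* topology and has the property that every weak* vector measure ν : 𝓜 → F* with range in W is a (norm-countably-additive) vector measure. Then every weak* i-measure μ : 𝓜 → L(E,W) ⊆ L(E,F*) is an i-measure. -/
open Filter Topology ENNReal

/-- A series of bounded operators `∑ Tₙ` is *independently convergent* if
`∑ Tₙ xₙ` converges in norm for every bounded sequence `(xₙ)`. -/
def IndepConv {E F : Type*} [NormedAddCommGroup E] [NormedSpace ℝ E]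
    [NormedAddCommGroup F] [NormedSpace ℝ F] (T : ℕ → E →L[ℝ] F) : Prop :=
  ∀ x : ℕ → E, (∃ C : ℝ, ∀ n, ‖x n‖ ≤ C) →
    ∃ y : F, Tendsto (fun N => ∑ n ∈ Finset.range N, T n (x n)) atTop (𝓝 y)

/-- An *i-measure* is an operator-valued set function which is countably additive in the
strong operator topology, and such that `∑ μ(Aₙ)` is independently convergent for every
sequence of pairwise disjoint measurable sets `(Aₙ)`. -/
def IsIMeasure {Z E F : Type*} [MeasurableSpace Z]
    [NormedAddCommGroup E] [NormedSpace ℝ E] [NormedAddCommGroup F] [NormedSpace ℝ F]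
    (μ : Set Z → E →L[ℝ] F) : Prop :=
  (∀ A : ℕ → Set Z, (∀ n, MeasurableSet (A n)) → Pairwise (Function.onFun Disjoint A) →
    ∀ x : E,
      Tendsto (fun N => ∑ n ∈ Finset.range N, μ (A n) x) atTop (𝓝 (μ (⋃ n, A n) x))) ∧
  (∀ A : ℕ → Set Z, (∀ n, MeasurableSet (A n)) → Pairwise (Function.onFun Disjoint A) →
    IndepConv fun n => μ (A n))

/-- The semivariation `‖μ‖_A` of an operator-valued set function `μ` on a set `A`. -/
noncomputable def semivar {Z E F : Type*} [MeasurableSpace Z]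
    [NormedAddCommGroup E] [NormedSpace ℝ E] [NormedAddCommGroup F] [NormedSpace ℝ F]
    (μ : Set Z → E →L[ℝ] F) (A : Set Z) : ℝ≥0∞ :=
  ⨆ (N : ℕ) (B : ℕ → Set Z) (_ : ∀ n, MeasurableSet (B n)) (_ : ∀ n, B n ⊆ A)
    (_ : Pairwise (Function.onFun Disjoint B)) (x : ℕ → E) (_ : ∀ n, ‖x n‖ ≤ 1),
    ENNReal.ofReal ‖∑ n ∈ Finset.range N, μ (B n) (x n)‖

/-- A *weak\* vector measure* with values in `F*`: countably additive against every `f ∈ F`. -/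
def IsWeakStarVectorMeasure {Z F : Type*} [MeasurableSpace Z]
    [NormedAddCommGroup F] [NormedSpace ℝ F] (ν : Set Z → StrongDual ℝ F) : Prop :=
  ∀ A : ℕ → Set Z, (∀ n, MeasurableSet (A n)) → Pairwise (Function.onFun Disjoint A) →
    ∀ f : F, Tendsto (fun N => ∑ n ∈ Finset.range N, ν (A n) f) atTop (𝓝 (ν (⋃ n, A n) f))

/-- A norm-countably-additive vector measure. -/
def IsVectorMeasure {Z E : Type*} [MeasurableSpace Z] [NormedAddCommGroup E]
    (ν : Set Z → E) : Prop :=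
  ∀ A : ℕ → Set Z, (∀ n, MeasurableSet (A n)) → Pairwise (Function.onFun Disjoint A) →
    Tendsto (fun N => ∑ n ∈ Finset.range N, ν (A n)) atTop (𝓝 (ν (⋃ n, A n)))

/-- A *weak\* i-measure*: for each `f ∈ F`, `A ↦ ⟨f, μ(A)(·)⟩` is an i-measure. -/
def IsWeakStarIMeasure {Z E F : Type*} [MeasurableSpace Z]
    [NormedAddCommGroup E] [NormedSpace ℝ E] [NormedAddCommGroup F] [NormedSpace ℝ F]
    (μ : Set Z → E →L[ℝ] StrongDual ℝ F) : Prop :=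
  ∀ f : F, IsIMeasure fun A => (μ A).flip f

/-!
Strong countable additivity is the hypothesis on `W` applied to `B ↦ μ(B)x`. For independent
convergence fix disjoint `Aₙ` and bounded `xₙ`, and localize: `ν(B) := ∑ₙ μ(B ∩ Aₙ)(xₙ)`, summed
weak*. Each scalar series converges absolutely (test the i-measure `⟨f, μ(·)⟩` against `±xₙ`),
Banach–Steinhaus makes `ν(B)` a functional, weak* sequential closedness puts it in `W`, and
exchanging the order of an absolutely convergent double series shows that `ν` is a weak* vector
measure. Hence `ν` is norm countably additive, and `ν(Aₘ) = μ(Aₘ)(xₘ)`.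
-/

theorem eq_zero_of_tendsto_nsmul_self {G : Type*} [AddCommGroup G] [TopologicalSpace G]
    [IsTopologicalAddGroup G] [T2Space G] {c : G}
    (h : Tendsto (fun N : ℕ => N • c) atTop (𝓝 c)) : c = 0 := by
  have hsucc : Tendsto (fun N : ℕ => (N + 1) • c - N • c) atTop (𝓝 (c - c)) :=
    (h.comp (tendsto_add_atTop_nat 1)).sub h
  simpa [add_nsmul, tendsto_const_nhds_iff] using hsucc

theorem ContinuousLinearMap.exists_hasSum_apply_of_summable {𝕜 E G : Type*}
    [NontriviallyNormedField 𝕜] [NormedAddCommGroup E] [NormedSpace 𝕜 E] [CompleteSpace E]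
    [NormedAddCommGroup G] [NormedSpace 𝕜 G]
    (φ : ℕ → E →L[𝕜] G) (h : ∀ y, Summable fun n => φ n y) :
    ∃ ψ : E →L[𝕜] G, ∀ y, HasSum (fun n => φ n y) (ψ y) :=
  ⟨continuousLinearMapOfTendsto (fun N => ∑ n ∈ Finset.range N, φ n)
      (f := fun y => ∑' n, φ n y)
      (tendsto_pi_nhds.2 fun y => by simpa using (h y).hasSum.tendsto_sum_nat),
    fun y => (h y).hasSum⟩

section

variable {Z E F : Type*} [MeasurableSpace Z] [NormedAddCommGroup E] [NormedSpace ℝ E]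
  [NormedAddCommGroup F] [NormedSpace ℝ F]

theorem IsIMeasure.apply_empty {μ : Set Z → E →L[ℝ] F} (hμ : IsIMeasure μ) : μ ∅ = 0 := by
  ext x
  refine eq_zero_of_tendsto_nsmul_self ?_
  simpa using hμ.1 (fun _ => ∅) (fun _ => .empty) (fun _ _ _ => Set.disjoint_empty _) x

theorem IndepConv.summable_apply {T : ℕ → E →L[ℝ] ℝ} (hT : IndepConv T) {x : ℕ → E} {C : ℝ}
    (hx : ∀ n, ‖x n‖ ≤ C) : Summable fun n => T n (x n) := by
  classical
  set y : ℕ → E := fun n => if 0 ≤ T n (x n) then x n else -x n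
  have hy : ∀ n, T n (y n) = |T n (x n)| := by
    intro n
    by_cases h : 0 ≤ T n (x n)
    · simp [y, h, abs_of_nonneg h]
    · simp [y, h, abs_of_neg (not_le.1 h)]
  obtain ⟨s, hs⟩ := hT y ⟨C, fun n => by by_cases h : 0 ≤ T n (x n) <;> simp [y, h, hx n]⟩
  simp only [hy] at hs
  exact Summable.of_abs ((hasSum_iff_tendsto_nat_of_nonneg (fun n => abs_nonneg _) s).2 hs).summable

theorem IsIMeasure.summable_apply {ι : Type*} [Denumerable ι] {μ : Set Z → E →L[ℝ] ℝ}
    (hμ : IsIMeasure μ) {D : ι → Set Z} (hD : ∀ i, MeasurableSet (D i))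
    (hdisj : Pairwise (Function.onFun Disjoint D)) {x : ι → E} {C : ℝ} (hx : ∀ i, ‖x i‖ ≤ C) :
    Summable fun i => μ (D i) (x i) := by
  set e := (Denumerable.eqv ι).symm
  rw [← e.summable_iff]
  exact (hμ.2 (D ∘ e) (fun n => hD _) (hdisj.comp_of_injective e.injective)).summable_apply
    (fun n => hx (e n))

theorem IsIMeasure.hasSum_inter_self {μ : Set Z → E →L[ℝ] ℝ} (hμ : IsIMeasure μ) {A : ℕ → Set Z}
    (hAdisj : Pairwise (Function.onFun Disjoint A)) (x : ℕ → E) (m : ℕ) :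
    HasSum (fun n => μ (A m ∩ A n) (x n)) (μ (A m) (x m)) := by
  have := hasSum_single (f := fun n => μ (A m ∩ A n) (x n)) m fun n hn => by
    rw [(hAdisj hn.symm).inter_eq, hμ.apply_empty, zero_apply]
  simpa using this

theorem IsIMeasure.hasSum_tsum_inter {μ : Set Z → E →L[ℝ] ℝ} (hμ : IsIMeasure μ)
    {A : ℕ → Set Z} (hA : ∀ n, MeasurableSet (A n)) (hAdisj : Pairwise (Function.onFun Disjoint A))
    {x : ℕ → E} {C : ℝ} (hx : ∀ n, ‖x n‖ ≤ C)
    {B : ℕ → Set Z} (hB : ∀ k, MeasurableSet (B k))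
    (hBdisj : Pairwise (Function.onFun Disjoint B)) :
    HasSum (fun k => ∑' n, μ (B k ∩ A n) (x n)) (∑' n, μ ((⋃ k, B k) ∩ A n) (x n)) := by
  set a : ℕ × ℕ → ℝ := fun p => μ (B p.1 ∩ A p.2) (x p.2)
  have hdisj : Pairwise (Function.onFun Disjoint fun p : ℕ × ℕ => B p.1 ∩ A p.2) := by
    rintro ⟨k, n⟩ ⟨k', n'⟩ hne
    by_cases hk : k = k'
    · have hn : n ≠ n' := fun hn => hne (by rw [hk, hn])
      exact (hAdisj hn).mono Set.inter_subset_right Set.inter_subset_right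
    · exact (hBdisj hk).mono Set.inter_subset_left Set.inter_subset_left
  have ha : Summable a := hμ.summable_apply (fun p => (hB _).inter (hA _)) hdisj fun p => hx p.2
  have hcol : ∀ n, HasSum (fun k => a (k, n)) (μ ((⋃ k, B k) ∩ A n) (x n)) := by
    intro n
    have hBn : Pairwise (Function.onFun Disjoint fun k => B k ∩ A n) := fun i j hij =>
      (hBdisj hij).mono Set.inter_subset_left Set.inter_subset_left
    have hcs : Summable fun k => a (k, n) :=
      hμ.summable_apply (fun k => (hB k).inter (hA n)) hBn fun _ => hx n
    rw [hcs.hasSum_iff_tendsto_nat, Set.iUnion_inter]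
    exact hμ.1 _ (fun k => (hB k).inter (hA n)) hBn (x n)
  have hrows : HasSum (fun k => ∑' n, a (k, n)) (∑' p, a p) :=
    ha.hasSum.prod_fiberwise fun k => (ha.prod_factor k).hasSum
  have hcols : HasSum (fun n => μ ((⋃ k, B k) ∩ A n) (x n)) (∑' p, a p) :=
    ((Equiv.prodComm ℕ ℕ).hasSum_iff.2 ha.hasSum).prod_fiberwise hcol
  exact hcols.tsum_eq ▸ hrows

theorem IsWeakStarIMeasure.exists_weakStarVectorMeasure [CompleteSpace F]
    {μ : Set Z → E →L[ℝ] StrongDual ℝ F} (hμ : IsWeakStarIMeasure μ)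
    {A : ℕ → Set Z} (hA : ∀ n, MeasurableSet (A n)) (hAdisj : Pairwise (Function.onFun Disjoint A))
    {x : ℕ → E} {C : ℝ} (hx : ∀ n, ‖x n‖ ≤ C) :
    ∃ ν : Set Z → StrongDual ℝ F, IsWeakStarVectorMeasure ν ∧
      ∀ B, MeasurableSet B → ∀ f, HasSum (fun n => μ (B ∩ A n) (x n) f) (ν B f) := by
  have hsum : ∀ B, MeasurableSet B → ∀ f, Summable fun n => μ (B ∩ A n) (x n) f :=
    fun B hB f => (hμ f).summable_apply (fun n => hB.inter (hA n))
      (fun i j hij => (hAdisj hij).mono Set.inter_subset_right Set.inter_subset_right) hx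
  choose! ν hν using fun B hB =>
    ContinuousLinearMap.exists_hasSum_apply_of_summable (fun n => μ (B ∩ A n) (x n)) (hsum B hB)
  refine ⟨ν, fun B hB hBdisj f => ?_, hν⟩
  have hadd := (hμ f).hasSum_tsum_inter hA hAdisj hx hB hBdisj
  simp only [ContinuousLinearMap.flip_apply, (hν _ (MeasurableSet.iUnion hB) f).tsum_eq,
    fun k => (hν _ (hB k) f).tsum_eq] at hadd
  exact hadd.tendsto_sum_nat

end

/-- If `W ⊆ F*` is weak* sequentially closed and every `W`-valued weak* vector measure is a
vector measure, then every weak* i-measure with values in `L(E,W)` is an i-measure. -/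
theorem weakStarIMeasure_isIMeasure {Z E F : Type*} [MeasurableSpace Z]
    [NormedAddCommGroup E] [NormedSpace ℝ E]
    [NormedAddCommGroup F] [NormedSpace ℝ F] [CompleteSpace F]
    (W : Submodule ℝ (StrongDual ℝ F))
    (hseq : ∀ (φ : ℕ → StrongDual ℝ F) (ψ : StrongDual ℝ F),
      (∀ n, φ n ∈ W) → (∀ f : F, Tendsto (fun n => φ n f) atTop (𝓝 (ψ f))) → ψ ∈ W)
    (hvm : ∀ ν : Set Z → StrongDual ℝ F, IsWeakStarVectorMeasure ν →
      (∀ A : Set Z, MeasurableSet A → ν A ∈ W) → IsVectorMeasure ν)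
    (μ : Set Z → E →L[ℝ] StrongDual ℝ F) (hμ : IsWeakStarIMeasure μ)
    (hrange : ∀ A : Set Z, MeasurableSet A → ∀ x : E, μ A x ∈ W) :
    IsIMeasure μ := by
  refine ⟨fun A hA hAdisj x => ?_, fun A hA hAdisj x ⟨C, hC⟩ => ?_⟩
  · exact hvm (fun B => μ B x) (fun B hB hBdisj f => (hμ f).1 B hB hBdisj x)
      (fun B hB => hrange B hB x) A hA hAdisj
  · obtain ⟨ν, hνvm, hν⟩ := hμ.exists_weakStarVectorMeasure hA hAdisj hC
    have hνW : ∀ B, MeasurableSet B → ν B ∈ W := fun B hB =>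
      hseq (fun N => ∑ n ∈ Finset.range N, μ (B ∩ A n) (x n)) (ν B)
        (fun N => W.sum_mem fun n _ => hrange _ (hB.inter (hA n)) _)
        fun f => by simpa only [sum_apply] using (hν B hB f).tendsto_sum_nat
    have hνA : ∀ m, ν (A m) = μ (A m) (x m) := fun m => ContinuousLinearMap.ext fun f =>
      (hν _ (hA m) f).unique ((hμ f).hasSum_inter_self hAdisj x m)
    exact ⟨ν (⋃ n, A n), by simpa only [hνA] using hvm ν hνvm hνW A hA hAdisj⟩
end

section
/- For every infinite second countable locally compact Hausdorff space Ω, the Banach space C₀(Ω,ℝ) is not variationally sequentially complete. In particular, c₀ and C([0,1],ℝ) are not vsc. -/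
/-!
Choose points `xₙ` and bumps `φₙ ∈ C₀(Ω)` with pairwise disjoint supports and `φₖ(xₙ) = δₙₖ`,
and pass to a subsequence along which the `xₙ` converge in `Ω` or escape to infinity, so that
`g(xₙ)` converges for every `g ∈ C₀(Ω)`. The sums `∑ₖ cₖ φₖ` with `|cₖ| ≤ 1` are uniformly
bounded, hence each `ψ ∈ 𝓕` is absolutely summable along `(φₖ)`, and vsc yields for every
`B ⊆ ℕ` an element `w B` with `ψ (w B) = ∑_{k ∈ B} ψ (φₖ)`: a bounded finitely additive map
extending finite sums. For fixed `n`, `B ↦ (w B)(xₙ) - 1_B(n)` is bounded, finitely additive and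
vanishes on finite sets, so it is at least `1/4` in absolute value on only finitely many members
of an almost disjoint family. Such a family can be uncountable, so it has an infinite, co-infinite
member `B` with `(w B)(xₙ)` within `1/4` of `1_B(n)` for all `n`, and `(w B)(xₙ)` cannot converge.
-/

open Filter Topology ZeroAtInfty

/-- A Banach space `F` is *variationally sequentially complete* (vsc) if there are a set
`𝓕 ⊆ F*` and a constant `λ ≥ 1` such that `(1/λ) sup_{ψ∈𝓕} |ψ x| ≤ ‖x‖ ≤ λ sup_{ψ∈𝓕} |ψ x|`
for all `x`, and every bounded sequence `(zₙ)` in `F` such that `ψ(zₙ)` converges for all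
`ψ ∈ 𝓕` admits `z ∈ F` with `ψ(zₙ) → ψ(z)` for all `ψ ∈ 𝓕`. -/
def IsVSC (F : Type*) [NormedAddCommGroup F] [NormedSpace ℝ F] : Prop :=
  ∃ (S : Set (StrongDual ℝ F)) (lam : ℝ), 1 ≤ lam ∧
    (∀ x : F, ∀ ψ ∈ S, ‖ψ x‖ ≤ lam * ‖x‖) ∧
    (∀ x : F, ‖x‖ ≤ lam * sSup ((fun ψ : StrongDual ℝ F => ‖ψ x‖) '' S)) ∧
    (∀ z : ℕ → F, (∃ C : ℝ, ∀ n, ‖z n‖ ≤ C) →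
      (∀ ψ ∈ S, ∃ l : ℝ, Tendsto (fun n => ψ (z n)) atTop (𝓝 l)) →
      ∃ w : F, ∀ ψ ∈ S, Tendsto (fun n => ψ (z n)) atTop (𝓝 (ψ w)))

open Set Function

theorem exists_almostDisjoint_family :
    ∃ A : Set ℕ → Set ℕ, (∀ s, (A s).Infinite) ∧ Pairwise fun s t => (A s ∩ A t).Finite := by
  classical
  -- `A s` codes the initial segments of `s`; distinct sets share only finitely many of them.
  let code : Set ℕ → ℕ → ℕ := fun s n => Encodable.encode (n, {i ∈ Finset.range n | i ∈ s})
  have code_eq : ∀ s t n m, code s n = code t m → n = m ∧ ∀ i < n, (i ∈ s ↔ i ∈ t) := by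
    intro s t n m h
    obtain ⟨rfl, h⟩ := Prod.ext_iff.1 (Encodable.encode_injective h)
    exact ⟨rfl, fun i hi => by simpa [hi] using Finset.ext_iff.1 h i⟩
  refine ⟨fun s => range (code s),
    fun s => infinite_range_of_injective fun n m h => (code_eq s s n m h).1, fun s t hst => ?_⟩
  obtain ⟨i, hi⟩ : ∃ i, ¬(i ∈ s ↔ i ∈ t) := by
    by_contra! h
    exact hst (Set.ext h)
  refine ((finite_Iic i).image (code s)).subset ?_
  rintro _ ⟨⟨n, rfl⟩, m, hm⟩
  obtain ⟨rfl, hagree⟩ := code_eq t s m n hm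
  exact ⟨m, mem_Iic.2 (not_lt.1 fun hm => hi (hagree i hm).symm), rfl⟩

theorem sum_abs_le_two_mul_of_forall_abs_sum_le {ι : Type*} {T : Finset ι} {a : ι → ℝ} {M : ℝ}
    (h : ∀ G ⊆ T, |∑ i ∈ G, a i| ≤ M) : ∑ i ∈ T, |a i| ≤ 2 * M := by
  classical
  have hpos : ∑ i ∈ T with 0 ≤ a i, |a i| = ∑ i ∈ T with 0 ≤ a i, a i :=
    Finset.sum_congr rfl fun i hi => abs_of_nonneg (Finset.mem_filter.1 hi).2
  have hneg : ∑ i ∈ T with ¬0 ≤ a i, |a i| = -∑ i ∈ T with ¬0 ≤ a i, a i := by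
    rw [← Finset.sum_neg_distrib]
    exact Finset.sum_congr rfl fun i hi => abs_of_neg (not_le.1 (Finset.mem_filter.1 hi).2)
  rw [← Finset.sum_filter_add_sum_filter_not T (fun i => 0 ≤ a i), hpos, hneg]
  linarith [(abs_le.1 (h _ (Finset.filter_subset (fun i => 0 ≤ a i) T))).2,
    (abs_le.1 (h _ (Finset.filter_subset (fun i => ¬0 ≤ a i) T))).1]

section FinitelyAdditive

variable {α : Type*} {μ : Set α → ℝ}
  (hadd : ∀ s t, Disjoint s t → μ (s ∪ t) = μ s + μ t) (hfin : ∀ s : Set α, s.Finite → μ s = 0)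
include hadd hfin

theorem apply_biUnion_finset {ι : Type*} (T : Finset ι) {B : ι → Set α}
    (hB : (T : Set ι).PairwiseDisjoint B) : μ (⋃ i ∈ T, B i) = ∑ i ∈ T, μ (B i) := by
  classical
  induction T using Finset.induction_on with
  | empty => simpa using hfin ∅ finite_empty
  | insert a T ha ih =>
    rw [Finset.coe_insert] at hB
    rw [Finset.set_biUnion_insert, Finset.sum_insert ha, hadd, ih (hB.subset (subset_insert _ _))]
    exact disjoint_iUnion₂_right.2 fun i hi =>
      hB (mem_insert a _) (mem_insert_of_mem _ hi) fun h => ha (h ▸ hi)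

theorem apply_eq_of_finite_diff {s t : Set α} (hst : s ⊆ t) (hts : (t \ s).Finite) :
    μ t = μ s := by
  rw [← union_sdiff_cancel hst, hadd _ _ disjoint_sdiff_right, hfin _ hts, add_zero]

theorem finite_setOf_le_abs_apply {M : ℝ} (hbdd : ∀ s, |μ s| ≤ M) {ι : Type*} {A : ι → Set α}
    (hA : Pairwise fun i j => (A i ∩ A j).Finite) {ε : ℝ} (hε : 0 < ε) :
    {i | ε ≤ |μ (A i)|}.Finite := by
  classical
  by_contra hinf
  obtain ⟨T, hT, hcard⟩ := Set.Infinite.exists_subset_card_eq hinf (⌊2 * M / ε⌋₊ + 1)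
  -- Removing the finite overlaps makes the `A i`, `i ∈ T`, disjoint without changing `μ`.
  let B : ι → Set α := fun i => A i \ ⋃ j ∈ T.erase i, A j
  have hB_disj : (T : Set ι).PairwiseDisjoint B := fun i hi j _ hij =>
    disjoint_left.2 fun x hxi hxj => hxj.2 (mem_iUnion₂.2 ⟨i, Finset.mem_erase.2 ⟨hij, hi⟩, hxi.1⟩)
  have hB_eq : ∀ i ∈ T, μ (B i) = μ (A i) := by
    intro i _
    refine (apply_eq_of_finite_diff hadd hfin sdiff_subset ?_).symm
    rw [sdiff_sdiff_right_self, inter_iUnion₂]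
    exact (T.erase i).finite_toSet.biUnion fun j hj => hA (Finset.ne_of_mem_erase hj).symm
  have hsum : ∑ i ∈ T, |μ (B i)| ≤ 2 * M := sum_abs_le_two_mul_of_forall_abs_sum_le fun G hG => by
    rw [← apply_biUnion_finset hadd hfin G (hB_disj.subset (Finset.coe_subset.2 hG))]
    exact hbdd _
  have hTε : (T.card : ℝ) * ε ≤ 2 * M := calc
    (T.card : ℝ) * ε = ∑ _i ∈ T, ε := by rw [Finset.sum_const, nsmul_eq_mul]
    _ ≤ ∑ i ∈ T, |μ (B i)| := Finset.sum_le_sum fun i hi => (hB_eq i hi).symm ▸ hT hi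
    _ ≤ 2 * M := hsum
  have hfloor := (div_lt_iff₀ hε).1 (Nat.lt_floor_add_one (2 * M / ε))
  rw [hcard] at hTε
  push_cast at hTε
  linarith

end FinitelyAdditive

theorem abs_indicator_one_le {α : Type*} (s : Set α) (a : α) :
    |s.indicator (1 : α → ℝ) a| ≤ 1 := by
  by_cases ha : a ∈ s <;> simp [ha]

theorem not_tendsto_of_abs_sub_indicator_le {u : ℕ → ℝ} {B : Set ℕ} {ε c : ℝ} (hB : B.Infinite)
    (hBc : Bᶜ.Infinite) (hε : ε < 1 / 2) (hu : ∀ n, |u n - B.indicator 1 n| ≤ ε) :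
    ¬Tendsto u atTop (𝓝 c) := by
  intro hc
  have hhigh : c ∈ Ici (1 - ε) := isClosed_Ici.mem_of_frequently_of_tendsto
    ((Nat.frequently_atTop_iff_infinite.2 hB).mono fun n hn => by
      have := hu n
      rw [indicator_of_mem hn, Pi.one_apply] at this
      exact mem_Ici.2 (by linarith [(abs_le.1 this).1])) hc
  have hlow : c ∈ Iic ε := isClosed_Iic.mem_of_frequently_of_tendsto
    ((Nat.frequently_atTop_iff_infinite.2 hBc).mono fun n hn => by
      have := hu n
      rw [indicator_of_notMem hn, sub_zero] at this
      exact mem_Iic.2 (abs_le.1 this).2) hc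
  linarith [mem_Ici.1 hhigh, mem_Iic.1 hlow]

section VSC

variable {F : Type*} [NormedAddCommGroup F] [NormedSpace ℝ F]

/-- For some `C`, this says that the series `∑ φₖ` is weakly unconditionally Cauchy. -/
def UnconditionallyBoundedWith (C : ℝ) (φ : ℕ → F) : Prop :=
  ∀ (s : Finset ℕ) (c : ℕ → ℝ), (∀ k, |c k| ≤ 1) → ‖∑ k ∈ s, c k • φ k‖ ≤ C

variable {C : ℝ} {φ : ℕ → F}

theorem UnconditionallyBoundedWith.sum_abs_apply_le (hφ : UnconditionallyBoundedWith C φ)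
    (ψ : StrongDual ℝ F) (s : Finset ℕ) : ∑ k ∈ s, |ψ (φ k)| ≤ ‖ψ‖ * C := by
  set c : ℕ → ℝ := fun k => if 0 ≤ ψ (φ k) then 1 else -1
  have hc : ∀ k, |c k| ≤ 1 := fun k => by unfold c; split_ifs <;> simp
  calc ∑ k ∈ s, |ψ (φ k)| = ψ (∑ k ∈ s, c k • φ k) := by
        simp only [map_sum, map_smul, smul_eq_mul]
        refine Finset.sum_congr rfl fun k _ => ?_
        unfold c
        split_ifs with h
        · simp [abs_of_nonneg h]
        · simp [abs_of_neg (not_le.1 h)]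
    _ ≤ ‖ψ‖ * ‖∑ k ∈ s, c k • φ k‖ := (le_abs_self _).trans (ψ.le_opNorm _)
    _ ≤ ‖ψ‖ * C := by gcongr; exact hφ s c hc

theorem UnconditionallyBoundedWith.summable_mul_apply (hφ : UnconditionallyBoundedWith C φ)
    (ψ : StrongDual ℝ F) {c : ℕ → ℝ} (hc : ∀ k, |c k| ≤ 1) :
    Summable fun k => c k * ψ (φ k) := by
  refine .of_norm_bounded (summable_of_sum_le (fun k => abs_nonneg _) (hφ.sum_abs_apply_le ψ))
    fun k => ?_
  rw [norm_mul, Real.norm_eq_abs, Real.norm_eq_abs]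
  exact mul_le_of_le_one_left (abs_nonneg _) (hc k)

theorem UnconditionallyBoundedWith.tendsto_apply_sum_range
    (hφ : UnconditionallyBoundedWith C φ) (ψ : StrongDual ℝ F) {c : ℕ → ℝ} (hc : ∀ k, |c k| ≤ 1) :
    Tendsto (fun n => ψ (∑ k ∈ Finset.range n, c k • φ k)) atTop
      (𝓝 (∑' k, c k * ψ (φ k))) := by
  simp only [map_sum, map_smul, smul_eq_mul]
  exact (hφ.summable_mul_apply ψ hc).hasSum.tendsto_sum_nat

theorem UnconditionallyBoundedWith.abs_tsum_mul_apply_le (hφ : UnconditionallyBoundedWith C φ)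
    (ψ : StrongDual ℝ F) {c : ℕ → ℝ} (hc : ∀ k, |c k| ≤ 1) :
    |∑' k, c k * ψ (φ k)| ≤ ‖ψ‖ * C :=
  le_of_tendsto' (hφ.tendsto_apply_sum_range ψ hc).abs fun _ =>
    (ψ.le_opNorm _).trans (by gcongr; exact hφ _ c hc)

variable {S : Set (StrongDual ℝ F)} {lam : ℝ}

theorem norm_le_mul_of_forall_norm_apply_le
    (hS : ∀ x : F, ‖x‖ ≤ lam * sSup ((fun ψ : StrongDual ℝ F => ‖ψ x‖) '' S)) (hlam : 0 ≤ lam)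
    {x : F} {K : ℝ} (hK : 0 ≤ K) (h : ∀ ψ ∈ S, ‖ψ x‖ ≤ K) : ‖x‖ ≤ lam * K :=
  (hS x).trans (mul_le_mul_of_nonneg_left (Real.sSup_le (forall_mem_image.2 h) hK) hlam)

theorem eq_of_forall_apply_eq
    (hS : ∀ x : F, ‖x‖ ≤ lam * sSup ((fun ψ : StrongDual ℝ F => ‖ψ x‖) '' S)) (hlam : 0 ≤ lam)
    {x y : F} (h : ∀ ψ ∈ S, ψ x = ψ y) : x = y := by
  have := norm_le_mul_of_forall_norm_apply_le hS hlam le_rfl (x := x - y) fun ψ hψ => by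
    simp [h ψ hψ]
  rw [mul_zero] at this
  exact sub_eq_zero.1 (norm_le_zero_iff.1 this)

theorem UnconditionallyBoundedWith.exists_forall_apply_eq_tsum
    (hcomplete : ∀ z : ℕ → F, (∃ C : ℝ, ∀ n, ‖z n‖ ≤ C) →
      (∀ ψ ∈ S, ∃ l : ℝ, Tendsto (fun n => ψ (z n)) atTop (𝓝 l)) →
      ∃ w : F, ∀ ψ ∈ S, Tendsto (fun n => ψ (z n)) atTop (𝓝 (ψ w)))
    (hφ : UnconditionallyBoundedWith C φ) {c : ℕ → ℝ} (hc : ∀ k, |c k| ≤ 1) :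
    ∃ v : F, ∀ ψ ∈ S, ψ v = ∑' k, c k * ψ (φ k) := by
  obtain ⟨v, hv⟩ := hcomplete _ ⟨C, fun n => hφ _ c hc⟩ fun ψ _ =>
    ⟨_, hφ.tendsto_apply_sum_range ψ hc⟩
  exact ⟨v, fun ψ hψ => tendsto_nhds_unique (hv ψ hψ) (hφ.tendsto_apply_sum_range ψ hc)⟩

theorem IsVSC.exists_additive_extension (hF : IsVSC F) (hφ : UnconditionallyBoundedWith C φ) :
    ∃ (w : Set ℕ → F) (M : ℝ), (∀ s t, Disjoint s t → w (s ∪ t) = w s + w t) ∧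
      (∀ s, ‖w s‖ ≤ M) ∧ ∀ s : Finset ℕ, w s = ∑ k ∈ s, φ k := by
  obtain ⟨S, lam, hlam, hS_le, hS, hcomplete⟩ := hF
  have hlam0 : 0 ≤ lam := zero_le_one.trans hlam
  have hC : 0 ≤ C := by simpa using hφ ∅ 0 (by simp)
  have hS_norm : ∀ ψ ∈ S, ‖ψ‖ ≤ lam := fun ψ hψ => ψ.opNorm_le_bound hlam0 fun x => hS_le x ψ hψ
  choose w hw using fun s : Set ℕ =>
    hφ.exists_forall_apply_eq_tsum hcomplete (abs_indicator_one_le s)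
  refine ⟨w, lam * (lam * C), fun s t hst => ?_, fun s => ?_, fun s => ?_⟩
  · refine eq_of_forall_apply_eq hS hlam0 fun ψ hψ => ?_
    rw [map_add, hw _ ψ hψ, hw s ψ hψ, hw t ψ hψ,
      ← (hφ.summable_mul_apply ψ (abs_indicator_one_le s)).tsum_add
        (hφ.summable_mul_apply ψ (abs_indicator_one_le t))]
    simp only [indicator_union_of_disjoint hst, add_mul]
  · refine norm_le_mul_of_forall_norm_apply_le hS hlam0 (by positivity) fun ψ hψ => ?_
    rw [hw s ψ hψ, Real.norm_eq_abs]
    exact (hφ.abs_tsum_mul_apply_le ψ (abs_indicator_one_le s)).trans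
      (by gcongr; exact hS_norm ψ hψ)
  · refine eq_of_forall_apply_eq hS hlam0 fun ψ hψ => ?_
    rw [hw _ ψ hψ, map_sum, tsum_eq_sum (s := s) fun k hk => by simp [hk]]
    exact Finset.sum_congr rfl fun k hk => by simp [hk]

theorem IsVSC.exists_not_tendsto_apply (hF : IsVSC F) (hφ : UnconditionallyBoundedWith C φ)
    (e : ℕ → StrongDual ℝ F) (he : ∀ n k, e n (φ k) = if n = k then 1 else 0) :
    ∃ y : F, ¬∃ c, Tendsto (fun n => e n y) atTop (𝓝 c) := by
  classical
  obtain ⟨w, M, hadd, hbdd, hfin⟩ := hF.exists_additive_extension hφ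
  obtain ⟨A, hA_inf, hA_ad⟩ := exists_almostDisjoint_family
  set μ : ℕ → Set ℕ → ℝ := fun n s => e n (w s) - s.indicator 1 n
  have hμ_add : ∀ n s t, Disjoint s t → μ n (s ∪ t) = μ n s + μ n t := fun n s t hst => by
    simp only [μ, hadd s t hst, map_add, indicator_union_of_disjoint hst]
    ring
  have hμ_fin : ∀ n s, s.Finite → μ n s = 0 := fun n s hs => by
    lift s to Finset ℕ using hs
    simp [μ, hfin, he, Finset.sum_ite_eq, indicator_apply]
  have hμ_bdd : ∀ n s, |μ n s| ≤ ‖e n‖ * M + 1 := fun n s =>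
    (abs_sub _ _).trans (add_le_add ((e n).le_opNorm _ |>.trans (by gcongr; exact hbdd s))
      (abs_indicator_one_le s n))
  have hsmall : ∀ n, {s | 1 / 4 ≤ |μ n (A s)|}.Finite := fun n =>
    finite_setOf_le_abs_apply (hμ_add n) (hμ_fin n) (hμ_bdd n) hA_ad (by norm_num)
  have : Uncountable (Set ℕ) := uncountable_iff_forall_not_surjective.2 cantor_surjective
  obtain ⟨s, hs⟩ : (⋃ n, {s | 1 / 4 ≤ |μ n (A s)|})ᶜ.Nonempty :=
    nonempty_compl.2 fun h =>
      not_countable_univ (h ▸ countable_iUnion fun n => (hsmall n).countable)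
  obtain ⟨t, hts⟩ := exists_ne s
  refine ⟨w (A s), fun ⟨c, hc⟩ => not_tendsto_of_abs_sub_indicator_le (hA_inf s) ?_
    (by norm_num : (1 / 4 : ℝ) < 1 / 2) (fun n => ?_) hc⟩
  · exact ((hA_inf t).sdiff (hA_ad hts)).mono fun k hk hks => hk.2 ⟨hk.1, hks⟩
  · exact (not_le.1 fun h => hs (mem_iUnion.2 ⟨n, h⟩)).le

end VSC

theorem exists_strictMono_tendsto_nhds_or_cocompact {X : Type*} [TopologicalSpace X]
    [FirstCountableTopology X] (x : ℕ → X) :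
    ∃ σ : ℕ → ℕ, StrictMono σ ∧
      ((∃ p, Tendsto (x ∘ σ) atTop (𝓝 p)) ∨ Tendsto (x ∘ σ) atTop (cocompact X)) := by
  by_cases h : ∃ p, MapClusterPt p atTop x
  · obtain ⟨p, hp⟩ := h
    obtain ⟨σ, hσ, hσp⟩ := hp.tendsto_subseq
    exact ⟨σ, hσ, .inl ⟨p, hσp⟩⟩
  · refine ⟨id, strictMono_id, .inr (hasBasis_cocompact.tendsto_right_iff.2 fun K hK => ?_)⟩
    by_contra hfreq
    obtain ⟨p, -, hp⟩ := hK.exists_mapClusterPt_of_frequently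
      ((not_eventually.1 hfreq).mono fun n hn => not_not.1 hn)
    exact h ⟨p, hp⟩

namespace ZeroAtInftyContinuousMap

variable {Ω : Type*} [TopologicalSpace Ω]

noncomputable def evalCLM (𝕜 : Type*) {β : Type*} [NormedField 𝕜] [SeminormedAddCommGroup β]
    [NormedSpace 𝕜 β] (x : Ω) : C₀(Ω, β) →L[𝕜] β :=
  LinearMap.mkContinuous
    { toFun := fun f => f x, map_add' := fun _ _ => rfl, map_smul' := fun _ _ => rfl } 1
    fun f => by simpa using f.toBCF.norm_coe_le_norm x

@[simp]
theorem evalCLM_apply {𝕜 β : Type*} [NormedField 𝕜] [SeminormedAddCommGroup β]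
    [NormedSpace 𝕜 β] (x : Ω) (f : C₀(Ω, β)) : evalCLM 𝕜 x f = f x :=
  rfl

theorem unconditionallyBoundedWith_one {φ : ℕ → C₀(Ω, ℝ)} (hφ : ∀ k, ‖φ k‖ ≤ 1)
    (hdisj : Pairwise (Disjoint on fun k => support (φ k))) : UnconditionallyBoundedWith 1 φ := by
  intro s c hc
  rw [← norm_toBCF_eq_norm, BoundedContinuousFunction.norm_le zero_le_one]
  intro y
  have hval : (∑ k ∈ s, c k • φ k).toBCF y = ∑ k ∈ s, c k * φ k y := by
    change evalCLM ℝ y (∑ k ∈ s, c k • φ k) = _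
    simp [map_sum]
  rw [hval]
  by_cases h : ∃ j ∈ s, φ j y ≠ 0
  · obtain ⟨j, hj, hjy⟩ := h
    rw [Finset.sum_eq_single_of_mem j hj fun k _ hkj =>
      by rw [notMem_support.1 fun hk => disjoint_left.1 (hdisj hkj) hk hjy, mul_zero]]
    rw [norm_mul, Real.norm_eq_abs, ← one_mul 1]
    exact mul_le_mul (hc j) (((φ j).toBCF.norm_coe_le_norm y).trans (hφ j)) (norm_nonneg _)
      zero_le_one
  · push Not at h
    rw [Finset.sum_eq_zero fun k hk => by rw [h k hk, mul_zero]]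
    simp

theorem exists_strictMono_forall_tendsto {β : Type*} [FirstCountableTopology Ω]
    [TopologicalSpace β] [Zero β] (x : ℕ → Ω) :
    ∃ σ : ℕ → ℕ, StrictMono σ ∧
      ∀ g : C₀(Ω, β), ∃ c, Tendsto (fun n => g (x (σ n))) atTop (𝓝 c) := by
  obtain ⟨σ, hσ, ⟨p, hp⟩ | hσ_coc⟩ := exists_strictMono_tendsto_nhds_or_cocompact x
  · exact ⟨σ, hσ, fun g => ⟨g p, ((map_continuous g).tendsto p).comp hp⟩⟩
  · exact ⟨σ, hσ, fun g => ⟨0, (zero_at_infty g).comp hσ_coc⟩⟩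

variable (Ω) in
theorem exists_disjoint_bumps [LocallyCompactSpace Ω] [T2Space Ω] [Infinite Ω] :
    ∃ (x : ℕ → Ω) (φ : ℕ → C₀(Ω, ℝ)), (∀ n k, φ k (x n) = if n = k then 1 else 0) ∧
      (∀ k, ‖φ k‖ ≤ 1) ∧ Pairwise (Disjoint on fun k => support (φ k)) := by
  obtain ⟨U, hU_inf, hU_open, hU_disj⟩ := exists_seq_infinite_isOpen_pairwise_disjoint Ω
  choose x hx using fun k => (hU_inf k).nonempty
  have hbump : ∀ k, ∃ f : C(Ω, ℝ), f (x k) = 1 ∧ HasCompactSupport f ∧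
      (∀ y, f y ∈ Icc (0 : ℝ) 1) ∧ support f ⊆ U k := by
    intro k
    obtain ⟨f, hf1, hf0, hfc, hf01⟩ := exists_continuous_one_zero_of_isCompact isCompact_singleton
      (hU_open k).isClosed_compl (disjoint_singleton_left.2 (not_not.2 (hx k)))
    exact ⟨f, hf1 rfl, hfc, hf01, fun y hy => not_not.1 fun hyU => hy (hf0 hyU)⟩
  choose f hf1 hfc hf01 hfU using hbump
  refine ⟨x, fun k => ⟨f k, (hfc k).is_zero_at_infty⟩, fun n k => ?_, fun k => ?_,
    fun j k hjk => (hU_disj hjk).mono (hfU j) (hfU k)⟩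
  · split_ifs with h
    · exact h ▸ hf1 n
    · exact notMem_support.1 fun hk => disjoint_left.1 (hU_disj h) (hx n) (hfU k hk)
  · rw [← norm_toBCF_eq_norm, BoundedContinuousFunction.norm_le zero_le_one]
    intro y
    show |f k y| ≤ 1
    exact abs_le.2 ⟨by linarith [(hf01 k y).1], (hf01 k y).2⟩

end ZeroAtInftyContinuousMap

/-- For every infinite second countable locally compact Hausdorff space `Ω`, the Banach
space `C₀(Ω,ℝ)` is not variationally sequentially complete. -/
theorem c0_not_vsc (Ω : Type*) [TopologicalSpace Ω] [LocallyCompactSpace Ω] [T2Space Ω]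
    [SecondCountableTopology Ω] [Infinite Ω] :
    ¬ IsVSC C₀(Ω, ℝ) := by
  intro hvsc
  obtain ⟨x, φ, hφx, hφ_norm, hφ_disj⟩ := ZeroAtInftyContinuousMap.exists_disjoint_bumps Ω
  obtain ⟨σ, hσ, hconv⟩ := ZeroAtInftyContinuousMap.exists_strictMono_forall_tendsto (β := ℝ) x
  obtain ⟨y, hy⟩ := hvsc.exists_not_tendsto_apply
    (ZeroAtInftyContinuousMap.unconditionallyBoundedWith_one (fun k => hφ_norm (σ k))
      (hφ_disj.comp_of_injective hσ.injective))
    (fun n => ZeroAtInftyContinuousMap.evalCLM ℝ (x (σ n))) fun n k => by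
      simp [hφx, hσ.injective.eq_iff]
  exact hy (hconv y)
end
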